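/- A set system 𝓕 ⊆ 2^[n] is shattering-extremal if and only if there exists a collection of pairs H ⊆ S ⊆ [n] such that the corresponding polynomials f_{S,H}, together with the polynomials x_i^2 − x_i for i ∈ [n], form a universal Gröbner basis of the vanishing ideal I(𝓕) ⊴ 𝔽[x_1,…,x_n]. -/

import Mathlib

open MvPolynomial

/-- Monomials of `𝔽[x_1,…,x_n]` identified with their exponent vectors. -/
abbrev Mon (n : ℕ) := Fin n →₀ ℕ

/-- A linear order on monomials is a term order if `1` (i.e. the zero exponent
vector) is minimal and the order is compatible with multiplication by monomials. -/
def IsTermOrder {n : ℕ} (lin : LinearOrder (Mon n)) : Prop :=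
  (∀ u : Mon n, lin.le 0 u) ∧
    ∀ u v w : Mon n, lin.le u v → lin.le (u + w) (v + w)

/-- The strict lexicographic comparison of exponent vectors induced by the variable
ordering `x_{σ 0} ≻ x_{σ 1} ≻ ⋯ ≻ x_{σ (n-1)}`. -/
def lexLt {n : ℕ} (σ : Equiv.Perm (Fin n)) (u v : Mon n) : Prop :=
  ∃ j : Fin n, u (σ j) < v (σ j) ∧ ∀ i : Fin n, i < j → u (σ i) = v (σ i)

/-- `lin` is the lexicographic term order induced by the variable ordering
`x_{σ 0} ≻ x_{σ 1} ≻ ⋯ ≻ x_{σ (n-1)}`. -/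
def IsLexOrder {n : ℕ} (σ : Equiv.Perm (Fin n)) (lin : LinearOrder (Mon n)) : Prop :=
  ∀ u v : Mon n, lin.lt u v ↔ lexLt σ u v

/-- `m` is the leading monomial of `f` with respect to the monomial order `lin`. -/
def IsLeadMon {n : ℕ} {F : Type*} [CommSemiring F] (lin : LinearOrder (Mon n))
    (f : MvPolynomial (Fin n) F) (m : Mon n) : Prop :=
  m ∈ f.support ∧ ∀ m' ∈ f.support, lin.le m' m

/-- The set of standard monomials of an ideal `I` with respect to the monomial
order `lin`: monomials that are not the leading monomial of any nonzero `f ∈ I`. -/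
def stdMon {n : ℕ} {F : Type*} [CommSemiring F] (lin : LinearOrder (Mon n))
    (I : Ideal (MvPolynomial (Fin n) F)) : Set (Mon n) :=
  { m | ¬ ∃ f ∈ I, f ≠ 0 ∧ IsLeadMon lin f m }

/-- The vanishing ideal of a point set `V ⊆ F^n`. -/
def vanishIdeal {n : ℕ} {F : Type*} [CommRing F] (V : Set (Fin n → F)) :
    Ideal (MvPolynomial (Fin n) F) where
  carrier := { f | ∀ v ∈ V, MvPolynomial.eval v f = 0 }
  add_mem' := by
    intro a b ha hb v hv
    simp [map_add, ha v hv, hb v hv]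
  zero_mem' := by intro v hv; simp
  smul_mem' := by
    intro c f hf v hv
    simp [smul_eq_mul, hf v hv]

/-- A finite point set (in `{0,…,k-1}^n`, over any field) is extremal if its vanishing
ideal has the same standard monomials for every lexicographic term order. -/
def IsExtremal {n : ℕ} {F : Type*} [CommRing F] (V : Set (Fin n → F)) : Prop :=
  ∀ (σ₁ σ₂ : Equiv.Perm (Fin n)) (lin₁ lin₂ : LinearOrder (Mon n)),
    IsLexOrder σ₁ lin₁ → IsLexOrder σ₂ lin₂ →
      stdMon lin₁ (vanishIdeal V) = stdMon lin₂ (vanishIdeal V)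

/-- Embedding of a point of `{0,…,k-1}^n` into `F^n`. -/
def toField {n k : ℕ} (F : Type*) [Field F] (w : Fin n → Fin k) : Fin n → F :=
  fun i => ((w i : ℕ) : F)

/-- Identification of a point of `{0,…,k-1}^n` with an exponent vector in `ℕ^n`. -/
noncomputable def toExp {n k : ℕ} (w : Fin n → Fin k) : Mon n :=
  Finsupp.equivFunOnFinite.symm fun i => (w i : ℕ)

/-- The downshift `D_i(V)` of `V ⊆ {0,…,k-1}^n` at coordinate `i`: its `i`-section at
each choice of the other coordinates is `{0,1,…,m-1}` where `m` is the size of the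
corresponding `i`-section of `V`. -/
def downshift {n k : ℕ} (V : Finset (Fin n → Fin k)) (i : Fin n) :
    Finset (Fin n → Fin k) :=
  Finset.univ.filter fun w =>
    (w i : ℕ) < (Finset.univ.filter fun α : Fin k => Function.update w i α ∈ V).card

/-- The iterated downshift `D_{σ(n-1)}(D_{σ(n-2)}(⋯(D_{σ 0}(V))))`,
i.e. downshifts are applied at coordinates `σ 0, σ 1, …, σ (n-1)` in this order. -/
def iterDownshift {n k : ℕ} (σ : Equiv.Perm (Fin n)) (V : Finset (Fin n → Fin k)) :
    Finset (Fin n → Fin k) :=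
  (List.ofFn fun j : Fin n => σ j).foldl downshift V

/-- A polynomial is degree dominated (with dominating term `x^w`) if it equals
`x^w + Σ αᵢ x^{vᵢ}` where each `x^{vᵢ}` divides `x^w`. -/
def IsDegDominated {n : ℕ} {F : Type*} [CommSemiring F]
    (f : MvPolynomial (Fin n) F) : Prop :=
  ∃ w : Mon n, MvPolynomial.coeff w f = 1 ∧ ∀ v ∈ f.support, v ≤ w

/-- `G` is a Gröbner basis of `I` with respect to the monomial order `lin`:
`G ⊆ I` and for every nonzero `f ∈ I` some `g ∈ G` has leading monomial dividing
the leading monomial of `f` (divisibility of monomials being `≤` of exponents). -/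
def IsGroebner {n : ℕ} {F : Type*} [CommSemiring F] (lin : LinearOrder (Mon n))
    (G : Finset (MvPolynomial (Fin n) F)) (I : Ideal (MvPolynomial (Fin n) F)) : Prop :=
  (∀ g ∈ G, g ∈ I) ∧
    ∀ f ∈ I, f ≠ 0 → ∀ m : Mon n, IsLeadMon lin f m →
      ∃ g ∈ G, ∃ mg : Mon n, IsLeadMon lin g mg ∧ mg ≤ m

/-- `G` is a universal Gröbner basis of `I` if it is a Gröbner basis for every term order. -/
def IsUnivGroebner {n : ℕ} {F : Type*} [CommSemiring F]
    (G : Finset (MvPolynomial (Fin n) F)) (I : Ideal (MvPolynomial (Fin n) F)) : Prop :=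
  ∀ lin : LinearOrder (Mon n), IsTermOrder lin → IsGroebner lin G I

/-- A term order is an elimination order with respect to `x_i` if `x_i` is greater
than every monomial not involving `x_i`. -/
def IsElimOrder {n : ℕ} (lin : LinearOrder (Mon n)) (i : Fin n) : Prop :=
  IsTermOrder lin ∧ ∀ m : Mon n, m i = 0 → lin.lt m (Finsupp.single i 1)

/-- A set system `𝓕` shatters `S` if every subset of `S` is the intersection of `S`
with a member of `𝓕`. -/
def Shatters {n : ℕ} (𝓕 : Finset (Finset (Fin n))) (S : Finset (Fin n)) : Prop :=
  ∀ T ⊆ S, ∃ Fm ∈ 𝓕, Fm ∩ S = T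

open scoped Classical in
/-- The family `Sh(𝓕)` of sets shattered by `𝓕`. -/
noncomputable def shatteredFamily {n : ℕ} (𝓕 : Finset (Finset (Fin n))) :
    Finset (Finset (Fin n)) :=
  Finset.univ.filter fun S => Shatters 𝓕 S

/-- A set system is shattering-extremal if it shatters exactly `|𝓕|` sets. -/
def IsSExtremal {n : ℕ} (𝓕 : Finset (Finset (Fin n))) : Prop :=
  (shatteredFamily 𝓕).card = 𝓕.card

/-- The characteristic vector of a set, as a point of `F^n`. -/
def charVec {n : ℕ} (F : Type*) [Field F] (Fm : Finset (Fin n)) : Fin n → F :=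
  fun i => if i ∈ Fm then 1 else 0

/-- The squarefree monomial `∏_{i ∈ S} x_i` associated to a set `S ⊆ [n]`,
as an exponent vector. -/
noncomputable def setMon {n : ℕ} (S : Finset (Fin n)) : Mon n :=
  Finsupp.equivFunOnFinite.symm fun i => if i ∈ S then 1 else 0

/-- The polynomial `f_{S,H} = (∏_{i∈H} x_i) ⬝ ∏_{i∈S∖H} (x_i - 1)`. -/
noncomputable def fSH {n : ℕ} (F : Type*) [Field F] (S H : Finset (Fin n)) :
    MvPolynomial (Fin n) F :=
  (∏ i ∈ H, X i) * ∏ i ∈ S \ H, (X i - 1)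

/-- The downshift `D_i(𝓕)` of a set system. -/
def dshiftSet {n : ℕ} (𝓕 : Finset (Finset (Fin n))) (i : Fin n) :
    Finset (Finset (Fin n)) :=
  𝓕.image (fun Fm => Fm.erase i) ∪ 𝓕.filter fun Fm => i ∈ Fm ∧ Fm.erase i ∈ 𝓕

/-- The iterated downshift `D_{σ(n-1)}(⋯(D_{σ 0}(𝓕)))` of a set system:
downshifts are applied at `σ 0, σ 1, …, σ (n-1)` in this order. -/
def iterDshiftSet {n : ℕ} (σ : Equiv.Perm (Fin n)) (𝓕 : Finset (Finset (Fin n))) :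
    Finset (Finset (Fin n)) :=
  (List.ofFn fun j : Fin n => σ j).foldl dshiftSet 𝓕

/-- Restriction of an exponent vector in `ℕ^{n+1}` to its first `n` coordinates. -/
noncomputable def restrictMon {n : ℕ} (w : Mon (n + 1)) : Mon n :=
  Finsupp.equivFunOnFinite.symm fun i => w i.castSucc

/-!
Fix a term order. Evaluation at the characteristic vectors maps `F[x]` onto `F^𝓕` (the
`f_{[n],H}` evaluate to signed point indicators) with kernel `I(𝓕)`, and a monomial evaluates
like the squarefree monomial on its support. The images of the standard squarefree monomials
`x_S` are therefore independent (a combination vanishing on `𝓕` would have a standard leading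
monomial) and spanning (an order-minimal squarefree `x_S` outside their span is a leading
monomial `lm f`, and `f` expresses it through smaller ones), so there are exactly `|𝓕|` of them.
Each such `S` is shattered: if `H ⊆ S` is not a trace of `𝓕` on `S`, then `f_{S,H} ∈ I(𝓕)`,
and `f_{S,H}` is `x_S` plus monomials dividing `x_S`, so `x_S` is its leading monomial for
every term order.

Hence `𝓕` is s-extremal iff the standard squarefree sets are the shattered sets. In that case
the `f_{S,H}` with `H` a missing trace, together with the `x_i² - x_i`, supply a divisor of every
leading monomial, for every term order. Conversely, if such a family is a Gröbner basis, a
shattered `S` cannot be a leading set: its divisor `x_{S'}` would be the leading monomial of some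
`f_{S',H} ∈ I(𝓕)`, yet `S' ⊆ S` is shattered, so `H` is a trace.
-/

open Finset hiding Shatters

section Dominated

variable {σ R : Type*} [CommSemiring R]

def IsDegDominatedBy (f : MvPolynomial σ R) (w : σ →₀ ℕ) : Prop :=
  coeff w f = 1 ∧ ∀ v ∈ f.support, v ≤ w

lemma IsDegDominatedBy.mul {f g : MvPolynomial σ R} {u v : σ →₀ ℕ}
    (hf : IsDegDominatedBy f u) (hg : IsDegDominatedBy g v) :
    IsDegDominatedBy (f * g) (u + v) := by
  classical
  refine ⟨?_, fun w hw => ?_⟩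
  · rw [coeff_mul, Finset.sum_eq_single (u, v)]
    · rw [hf.1, hg.1, one_mul]
    · rintro ⟨a, b⟩ hab hne
      rw [HasAntidiagonal.mem_antidiagonal] at hab
      by_contra h
      obtain ⟨ha, hb⟩ := ne_zero_and_ne_zero_of_mul h
      have ha := hf.2 a (mem_support_iff.2 ha)
      have hb := hg.2 b (mem_support_iff.2 hb)
      have hua : u ≤ a := le_of_add_le_add_right (a := v) (by rw [← hab]; gcongr)
      have hvb : v ≤ b := le_of_add_le_add_left (a := u) (by rw [← hab]; gcongr)
      exact hne (Prod.ext (le_antisymm ha hua) (le_antisymm hb hvb))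
    · simp
  · obtain ⟨a, ha, b, hb, rfl⟩ := Finset.mem_add.1 (support_mul f g hw)
    exact add_le_add (hf.2 a ha) (hg.2 b hb)

lemma IsDegDominatedBy.prod {ι : Type*} (s : Finset ι) {f : ι → MvPolynomial σ R}
    {d : ι → σ →₀ ℕ} (h : ∀ i ∈ s, IsDegDominatedBy (f i) (d i)) :
    IsDegDominatedBy (∏ i ∈ s, f i) (∑ i ∈ s, d i) := by
  classical
  induction s using Finset.induction with
  | empty =>
    rw [prod_empty, sum_empty]
    refine ⟨by simp, fun v hv => ?_⟩
    rw [mem_support_iff, coeff_one] at hv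
    simp [(ite_ne_right_iff.1 hv).1.symm]
  | insert a s ha ih =>
    rw [prod_insert ha, sum_insert ha]
    exact (h a (mem_insert_self a s)).mul (ih fun i hi => h i (mem_insert_of_mem hi))

lemma isDegDominatedBy_X_sub_C {R : Type*} [CommRing R] [Nontrivial R] (i : σ) (a : R) :
    IsDegDominatedBy (X i - C a) (Finsupp.single i 1) := by
  classical
  refine ⟨by simp [coeff_X, coeff_C, eq_comm], fun v hv => ?_⟩
  rcases Finset.mem_union.1 (support_sub σ _ _ hv) with hv | hv
  · rw [support_X, mem_singleton] at hv
    exact hv.le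
  · rw [mem_support_iff, coeff_C] at hv
    rw [← (ite_ne_right_iff.1 hv).1]
    exact zero_le

end Dominated

section TermOrder

variable {n : ℕ} {lin : LinearOrder (Mon n)} {R : Type*} [CommSemiring R]
  {f : MvPolynomial (Fin n) R}

lemma IsTermOrder.le_of_le (hlin : IsTermOrder lin) {u v : Mon n} (h : u ≤ v) : lin.le u v := by
  simpa [tsub_add_cancel_of_le h] using hlin.2 0 (v - u) u (hlin.1 (v - u))

lemma IsLeadMon.unique {m m' : Mon n} (h : IsLeadMon lin f m) (h' : IsLeadMon lin f m') :
    m = m' :=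
  lin.le_antisymm _ _ (h'.2 m h.1) (h.2 m' h'.1)

lemma IsLeadMon.ne_zero {m : Mon n} (h : IsLeadMon lin f m) : f ≠ 0 := by
  rintro rfl
  simpa using h.1

lemma exists_isLeadMon (lin : LinearOrder (Mon n)) (hf : f ≠ 0) : ∃ m, IsLeadMon lin f m := by
  let _ : LinearOrder (Mon n) := lin
  obtain ⟨m, hm, hmax⟩ := f.support.exists_max_image id (support_nonempty.2 hf)
  exact ⟨m, hm, hmax⟩

lemma IsDegDominatedBy.isLeadMon [Nontrivial R] (hlin : IsTermOrder lin) {w : Mon n}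
    (h : IsDegDominatedBy f w) : IsLeadMon lin f w :=
  ⟨mem_support_iff.2 (h.1 ▸ one_ne_zero), fun _ hv => hlin.le_of_le (h.2 _ hv)⟩

lemma eq_zero_of_support_subset_stdMon {I : Ideal (MvPolynomial (Fin n) R)} (hf : f ∈ I)
    (hsupp : ↑f.support ⊆ stdMon lin I) : f = 0 := by
  by_contra hf0
  obtain ⟨m, hm⟩ := exists_isLeadMon lin hf0
  exact hsupp hm.1 ⟨f, hf, hf0, hm⟩

variable (n) in
lemma exists_isTermOrder : ∃ lin : LinearOrder (Mon n), IsTermOrder lin :=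
  ⟨LinearOrder.lift' toLex toLex.injective, fun u => bot_le (a := toLex u),
    fun u v w (h : toLex u ≤ toLex v) => show toLex (u + w) ≤ toLex (v + w) from
      add_le_add_left h (toLex w)⟩

end TermOrder

section SetMon

variable {n : ℕ}

lemma setMon_apply (S : Finset (Fin n)) (i : Fin n) : setMon S i = if i ∈ S then 1 else 0 :=
  rfl

lemma setMon_eq_sum_single (S : Finset (Fin n)) : setMon S = ∑ i ∈ S, Finsupp.single i 1 := by
  ext i
  simp [setMon_apply, Finsupp.finsetSum_apply, Finsupp.single_apply]

lemma support_setMon (S : Finset (Fin n)) : (setMon S).support = S := by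
  ext i
  simp [setMon_apply]

lemma setMon_injective : Function.Injective (setMon (n := n)) := fun S T h => by
  rw [← support_setMon S, h, support_setMon]

lemma setMon_le_setMon_iff {S T : Finset (Fin n)} : setMon S ≤ setMon T ↔ S ⊆ T := by
  simp only [Finsupp.le_def, setMon_apply, subset_iff]
  grind

lemma setMon_support_le (m : Mon n) : setMon m.support ≤ m := fun i => by
  simp only [setMon_apply, Finsupp.mem_support_iff]
  split_ifs <;> omega

lemma exists_single_two_le_or_setMon_support_eq (m : Mon n) :
    (∃ i, Finsupp.single i 2 ≤ m) ∨ setMon m.support = m := by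
  simp only [Finsupp.single_le_iff]
  by_cases h : ∃ i, 2 ≤ m i
  · exact Or.inl h
  · push Not at h
    refine Or.inr (Finsupp.ext fun i => ?_)
    have := h i
    simp only [setMon_apply, Finsupp.mem_support_iff]
    split_ifs <;> omega

lemma not_single_two_le_setMon (i : Fin n) (S : Finset (Fin n)) :
    ¬ Finsupp.single i 2 ≤ setMon S := by
  rw [Finsupp.single_le_iff, setMon_apply]
  split_ifs <;> omega

end SetMon

section Polynomials

variable {n : ℕ} {F : Type*} [Field F]

lemma isDegDominatedBy_fSH {S H : Finset (Fin n)} (h : H ⊆ S) :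
    IsDegDominatedBy (fSH F S H) (setMon S) := by
  have hX : ∀ i ∈ H, IsDegDominatedBy (X i : MvPolynomial (Fin n) F) (Finsupp.single i 1) :=
    fun i _ => by simpa using isDegDominatedBy_X_sub_C (R := F) i 0
  have hX1 : ∀ i ∈ S \ H,
      IsDegDominatedBy (X i - 1 : MvPolynomial (Fin n) F) (Finsupp.single i 1) :=
    fun i _ => by simpa using isDegDominatedBy_X_sub_C (R := F) i 1
  rw [setMon_eq_sum_single, ← sum_sdiff h, add_comm]
  exact (IsDegDominatedBy.prod H hX).mul (IsDegDominatedBy.prod _ hX1)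

lemma isDegDominatedBy_X_sq_sub_X {σ R : Type*} [CommRing R] [Nontrivial R] (i : σ) :
    IsDegDominatedBy (X i ^ 2 - X i : MvPolynomial σ R) (Finsupp.single i 2) := by
  have := (isDegDominatedBy_X_sub_C (R := R) i 0).mul (isDegDominatedBy_X_sub_C i 1)
  rwa [map_zero, sub_zero, map_one, ← Finsupp.single_add, mul_sub_one, ← sq] at this

lemma eval_charVec_monomial (Fm : Finset (Fin n)) (w : Mon n) (c : F) :
    eval (charVec F Fm) (monomial w c) = if w.support ⊆ Fm then c else 0 := by
  have hpow : ∀ i ∈ w.support, charVec F Fm i ^ w i = if i ∈ Fm then 1 else 0 := fun i hi => by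
    rw [charVec, ite_pow, one_pow, zero_pow (Finsupp.mem_support_iff.1 hi)]
  rw [eval_monomial, Finsupp.prod, prod_congr rfl hpow, prod_boole, mul_ite, mul_one, mul_zero]
  rfl

lemma eval_charVec_fSH {Fm S H : Finset (Fin n)} (h : H ⊆ S) :
    eval (charVec F Fm) (fSH F S H) = if Fm ∩ S = H then (-1) ^ #(S \ H) else 0 := by
  have hsub : ∀ i ∈ S \ H, charVec F Fm i - 1 = if i ∉ Fm then -1 else 0 := fun i _ => by
    by_cases hi : i ∈ Fm <;> simp [charVec, hi]
  rw [fSH, map_mul, map_prod, map_prod]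
  simp only [eval_X, map_sub, map_one]
  rw [prod_congr rfl hsub, prod_ite_zero, prod_const]
  simp only [charVec, prod_boole, ite_mul, one_mul, zero_mul]
  have hcond : ((∀ i ∈ H, i ∈ Fm) ∧ ∀ i ∈ S \ H, i ∉ Fm) ↔ Fm ∩ S = H := by
    simp only [Finset.ext_iff, mem_inter, mem_sdiff]
    grind
  by_cases hc : Fm ∩ S = H
  · obtain ⟨hH, hS⟩ := hcond.2 hc
    rw [if_pos hH, if_pos hS, if_pos hc]
  · rw [if_neg hc, ite_eq_right_iff]
    exact fun hH => if_neg fun hS => hc (hcond.1 ⟨hH, hS⟩)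

end Polynomials

section FamilyIdeal

variable {n : ℕ} {F : Type*} [Field F] {𝓕 : Finset (Finset (Fin n))}
  {f : MvPolynomial (Fin n) F}

variable (F) in
open scoped Classical in
noncomputable abbrev familyIdeal (𝓕 : Finset (Finset (Fin n))) :
    Ideal (MvPolynomial (Fin n) F) :=
  vanishIdeal ((𝓕.image (charVec F) : Finset (Fin n → F)) : Set (Fin n → F))

lemma mem_familyIdeal : f ∈ familyIdeal F 𝓕 ↔ ∀ Fm ∈ 𝓕, eval (charVec F Fm) f = 0 := by
  classical
  change (∀ v ∈ _, _) ↔ _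
  simp

lemma fSH_mem_familyIdeal_iff {S H : Finset (Fin n)} (h : H ⊆ S) :
    fSH F S H ∈ familyIdeal F 𝓕 ↔ ∀ Fm ∈ 𝓕, Fm ∩ S ≠ H := by
  simp only [mem_familyIdeal, eval_charVec_fSH h, ite_eq_right_iff,
    pow_eq_zero_iff', neg_eq_zero, one_ne_zero, false_and, imp_false]

lemma X_sq_sub_X_mem_familyIdeal (i : Fin n) :
    (X i ^ 2 - X i : MvPolynomial (Fin n) F) ∈ familyIdeal F 𝓕 :=
  mem_familyIdeal.2 fun Fm _ => by by_cases hi : i ∈ Fm <;> simp [charVec, hi]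

variable (F 𝓕) in
noncomputable def familyEval : MvPolynomial (Fin n) F →ₗ[F] (𝓕 → F) where
  toFun f Fm := eval (charVec F Fm.1) f
  map_add' _ _ := by ext; simp
  map_smul' _ _ := by ext; simp

lemma familyEval_apply (Fm : 𝓕) : familyEval F 𝓕 f Fm = eval (charVec F Fm.1) f :=
  rfl

lemma familyEval_eq_zero_iff : familyEval F 𝓕 f = 0 ↔ f ∈ familyIdeal F 𝓕 := by
  simp [funext_iff, familyEval_apply, mem_familyIdeal]

lemma familyEval_monomial (w : Mon n) (c : F) :
    familyEval F 𝓕 (monomial w c) = c • familyEval F 𝓕 (monomial (setMon w.support) 1) := by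
  ext Fm
  simp [familyEval_apply, eval_charVec_monomial, support_setMon]

lemma familyEval_surjective : Function.Surjective (familyEval F 𝓕) := by
  classical
  rw [← LinearMap.range_eq_top, Submodule.eq_top_iff']
  intro φ
  rw [pi_eq_sum_univ φ]
  refine Submodule.sum_mem _ fun Fm _ =>
    Submodule.smul_mem _ _ ⟨(-1 : F) ^ #(univ \ Fm.1) • fSH F univ Fm.1, ?_⟩
  ext G
  rw [map_smul, Pi.smul_apply, familyEval_apply, eval_charVec_fSH (subset_univ _), inter_univ]
  by_cases h : Fm = G
  · subst h
    simp [← pow_add, ← two_mul, pow_mul]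
  · have hG : G.1 ≠ Fm.1 := fun hG => h (Subtype.ext hG.symm)
    rw [if_neg hG, smul_zero, if_neg h]

end FamilyIdeal

section StandardSets

variable {n : ℕ} {F : Type*} [Field F] {𝓕 : Finset (Finset (Fin n))}
  {lin : LinearOrder (Mon n)}

variable (F) in
open scoped Classical in
noncomputable def stdSets (lin : LinearOrder (Mon n)) (𝓕 : Finset (Finset (Fin n))) :
    Finset (Finset (Fin n)) :=
  univ.filter fun S => setMon S ∈ stdMon lin (familyIdeal F 𝓕)

lemma mem_stdSets {S : Finset (Fin n)} :
    S ∈ stdSets F lin 𝓕 ↔ setMon S ∈ stdMon lin (familyIdeal F 𝓕) := by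
  classical
  simp [stdSets]

lemma linearIndependent_familyEval_stdSets :
    LinearIndependent F fun S : stdSets F lin 𝓕 => familyEval F 𝓕 (monomial (setMon S.1) 1) := by
  have hmon : LinearIndependent F fun S : stdSets F lin 𝓕 =>
      (monomial (setMon S.1) 1 : MvPolynomial (Fin n) F) :=
    (basisMonomials (Fin n) F).linearIndependent.comp _
      (setMon_injective.comp Subtype.val_injective)
  refine hmon.map (Submodule.disjoint_def.2 fun f hspan hker => ?_)
  have hsupp : ↑f.support ⊆ stdMon lin (familyIdeal F 𝓕) := by
    refine (mem_restrictSupport_iff F).1 (Submodule.span_le.2 ?_ hspan)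
    rintro _ ⟨S, rfl⟩
    exact (monomial_mem_restrictSupport F).2 (Or.inl (mem_stdSets.1 S.2))
  exact eq_zero_of_support_subset_stdMon (familyEval_eq_zero_iff.1 hker) hsupp

lemma familyEval_monomial_setMon_mem_span (hlin : IsTermOrder lin) (S : Finset (Fin n)) :
    familyEval F 𝓕 (monomial (setMon S) 1) ∈ Submodule.span F
      (Set.range fun T : stdSets F lin 𝓕 => familyEval F 𝓕 (monomial (setMon T.1) 1)) := by
  classical
  set W := Submodule.span F
    (Set.range fun T : stdSets F lin 𝓕 => familyEval F 𝓕 (monomial (setMon T.1) 1))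
  by_contra hS
  obtain ⟨S, hSW, hmin⟩ := @Finset.exists_min_image _ _ lin
    (univ.filter fun T => familyEval F 𝓕 (monomial (setMon T) 1) ∉ W) setMon ⟨S, by simpa⟩
  replace hSW : familyEval F 𝓕 (monomial (setMon S) 1) ∉ W := (mem_filter.1 hSW).2
  have hSstd : setMon S ∉ stdMon lin (familyIdeal F 𝓕) := fun h =>
    hSW (Submodule.subset_span ⟨⟨S, mem_stdSets.2 h⟩, rfl⟩)
  obtain ⟨f, hfI, -, hlead⟩ := not_not.1 hSstd
  have hrest : ∀ w ∈ f.support.erase (setMon S),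
      familyEval F 𝓕 (monomial w (coeff w f)) ∈ W := by
    intro w hw
    obtain ⟨hne, hw⟩ := mem_erase.1 hw
    rw [familyEval_monomial]
    refine W.smul_mem _ (by_contra fun hT => hne ?_)
    -- otherwise `x_S ≤ x_{supp w} ≤ w ≤ x_S` in `lin`, forcing `w = x_S`
    have hST := hmin w.support (mem_filter.2 ⟨mem_univ _, hT⟩)
    exact lin.le_antisymm _ _ (hlead.2 w hw)
      (lin.le_trans _ _ _ hST (hlin.le_of_le (setMon_support_le w)))
  have hsum : familyEval F 𝓕 (monomial (setMon S) (coeff (setMon S) f)) +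
      ∑ w ∈ f.support.erase (setMon S), familyEval F 𝓕 (monomial w (coeff w f)) = 0 := by
    rw [add_sum_erase _ (fun w => familyEval F 𝓕 (monomial w (coeff w f))) hlead.1, ← map_sum,
      support_sum_monomial_coeff]
    exact familyEval_eq_zero_iff.2 hfI
  rw [familyEval_monomial, support_setMon] at hsum
  refine hSW ((W.smul_mem_iff (mem_support_iff.1 hlead.1)).1 ?_)
  rw [eq_neg_of_add_eq_zero_left hsum]
  exact W.neg_mem (W.sum_mem hrest)

lemma card_stdSets (hlin : IsTermOrder lin) : #(stdSets F lin 𝓕) = #𝓕 := by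
  have hspan : ⊤ ≤ Submodule.span F (Set.range fun S : stdSets F lin 𝓕 =>
      familyEval F 𝓕 (monomial (setMon S.1) 1)) := by
    rintro φ -
    obtain ⟨f, rfl⟩ := familyEval_surjective φ
    rw [← support_sum_monomial_coeff f, map_sum]
    refine sum_mem fun w _ => ?_
    rw [familyEval_monomial]
    exact Submodule.smul_mem _ _ (familyEval_monomial_setMon_mem_span hlin _)
  have := Module.finrank_eq_card_basis (Module.Basis.mk linearIndependent_familyEval_stdSets hspan)
  simpa using this.symm

end StandardSets

section Shattering

variable {n : ℕ} {F : Type*} [Field F] {𝓕 : Finset (Finset (Fin n))}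
  {lin : LinearOrder (Mon n)}

lemma mem_shatteredFamily {S : Finset (Fin n)} : S ∈ shatteredFamily 𝓕 ↔ Shatters 𝓕 S := by
  classical
  simp [shatteredFamily]

lemma Shatters.mono {S T : Finset (Fin n)} (h : Shatters 𝓕 S) (hTS : T ⊆ S) : Shatters 𝓕 T := by
  intro U hUT
  obtain ⟨Fm, hFm, hFmS⟩ := h U (hUT.trans hTS)
  refine ⟨Fm, hFm, ?_⟩
  rw [← inter_eq_right.2 hTS, ← inter_assoc, hFmS, inter_eq_left.2 hUT]

lemma exists_not_trace_of_not_shatters {S : Finset (Fin n)} (h : ¬ Shatters 𝓕 S) :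
    ∃ H ⊆ S, ∀ Fm ∈ 𝓕, Fm ∩ S ≠ H := by
  simpa [Shatters] using h

lemma stdSets_subset_shatteredFamily (hlin : IsTermOrder lin) :
    stdSets F lin 𝓕 ⊆ shatteredFamily 𝓕 := by
  intro S hS
  rw [mem_shatteredFamily]
  by_contra hsh
  obtain ⟨H, hHS, hH⟩ := exists_not_trace_of_not_shatters hsh
  have hlead := (isDegDominatedBy_fSH (F := F) hHS).isLeadMon hlin
  exact mem_stdSets.1 hS ⟨fSH F S H, (fSH_mem_familyIdeal_iff hHS).2 hH, hlead.ne_zero, hlead⟩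

lemma stdSets_eq_shatteredFamily (hlin : IsTermOrder lin) (h : IsSExtremal 𝓕) :
    stdSets F lin 𝓕 = shatteredFamily 𝓕 :=
  eq_of_subset_of_card_le (stdSets_subset_shatteredFamily hlin) (by rw [h, card_stdSets hlin])

variable (𝓕) in
def missingTraces : Finset (Finset (Fin n) × Finset (Fin n)) :=
  univ.filter fun p => p.2 ⊆ p.1 ∧ ∀ Fm ∈ 𝓕, Fm ∩ p.1 ≠ p.2

variable (F) in
open scoped Classical in
noncomputable def fSHBasis (P : Finset (Finset (Fin n) × Finset (Fin n))) :
    Finset (MvPolynomial (Fin n) F) :=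
  (P.image fun p => fSH F p.1 p.2) ∪ univ.image fun i => X i ^ 2 - X i

lemma mem_fSHBasis {P : Finset (Finset (Fin n) × Finset (Fin n))} {g : MvPolynomial (Fin n) F} :
    g ∈ fSHBasis F P ↔ (∃ p ∈ P, fSH F p.1 p.2 = g) ∨ ∃ i, X i ^ 2 - X i = g := by
  simp [fSHBasis]

lemma isUnivGroebner_of_isSExtremal (h : IsSExtremal 𝓕) :
    IsUnivGroebner (fSHBasis F (missingTraces 𝓕)) (familyIdeal F 𝓕) := by
  intro lin hlin
  refine ⟨fun g hg => ?_, fun f hf hf0 m hm => ?_⟩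
  · rcases mem_fSHBasis.1 hg with ⟨p, hp, rfl⟩ | ⟨i, rfl⟩
    · obtain ⟨hp21, hp⟩ := (mem_filter.1 hp).2
      exact (fSH_mem_familyIdeal_iff hp21).2 hp
    · exact X_sq_sub_X_mem_familyIdeal i
  rcases exists_single_two_le_or_setMon_support_eq m with ⟨i, hi⟩ | hm_sq
  · exact ⟨X i ^ 2 - X i, mem_fSHBasis.2 (Or.inr ⟨i, rfl⟩), _,
      (isDegDominatedBy_X_sq_sub_X i).isLeadMon hlin, hi⟩
  · have hstd : m.support ∉ stdSets F lin 𝓕 := fun hS =>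
      mem_stdSets.1 hS ⟨f, hf, hf0, by rwa [hm_sq]⟩
    rw [stdSets_eq_shatteredFamily hlin h, mem_shatteredFamily] at hstd
    obtain ⟨H, hHS, hH⟩ := exists_not_trace_of_not_shatters hstd
    exact ⟨fSH F m.support H,
      mem_fSHBasis.2 (Or.inl ⟨(m.support, H), mem_filter.2 ⟨mem_univ _, hHS, hH⟩, rfl⟩), _,
      (isDegDominatedBy_fSH hHS).isLeadMon hlin, hm_sq.le⟩

lemma shatteredFamily_subset_stdSets {P : Finset (Finset (Fin n) × Finset (Fin n))}
    (hP : ∀ p ∈ P, p.2 ⊆ p.1) (hlin : IsTermOrder lin)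
    (hG : IsGroebner lin (fSHBasis F P) (familyIdeal F 𝓕)) :
    shatteredFamily 𝓕 ⊆ stdSets F lin 𝓕 := by
  intro S hS
  rw [mem_shatteredFamily] at hS
  rw [mem_stdSets]
  rintro ⟨f, hf, hf0, hlead⟩
  obtain ⟨g, hg, mg, hmg, hle⟩ := hG.2 f hf hf0 _ hlead
  rcases mem_fSHBasis.1 hg with ⟨p, hp, rfl⟩ | ⟨i, rfl⟩
  · rw [hmg.unique ((isDegDominatedBy_fSH (hP p hp)).isLeadMon hlin),
      setMon_le_setMon_iff] at hle
    obtain ⟨Fm, hFm, htrace⟩ := hS.mono hle p.2 (hP p hp)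
    exact (fSH_mem_familyIdeal_iff (hP p hp)).1 (hG.1 _ hg) Fm hFm htrace
  · rw [hmg.unique ((isDegDominatedBy_X_sq_sub_X i).isLeadMon hlin)] at hle
    exact not_single_two_le_setMon i S hle

end Shattering

open scoped Classical in
/-- Theorem `ExtremalGroebner`.
`𝓕 ⊆ 2^[n]` is shattering-extremal if and only if there is a collection of pairs
`H ⊆ S ⊆ [n]` such that the polynomials `f_{S,H}`, together with `xᵢ² - xᵢ` for
`i ∈ [n]`, form a universal Gröbner basis of `I(𝓕)`. -/
theorem sExtremal_iff_fSH_universal_groebner {n : ℕ} {F : Type*} [Field F]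
    (𝓕 : Finset (Finset (Fin n))) :
    IsSExtremal 𝓕 ↔
      ∃ P : Finset (Finset (Fin n) × Finset (Fin n)),
        (∀ p ∈ P, p.2 ⊆ p.1) ∧
        IsUnivGroebner
          ((P.image fun p => fSH F p.1 p.2) ∪
            (Finset.univ.image fun i : Fin n => (X i ^ 2 - X i : MvPolynomial (Fin n) F)))
          (vanishIdeal ((𝓕.image (charVec F) : Finset (Fin n → F)) :
            Set (Fin n → F))) := by
  constructor
  · intro h
    exact ⟨missingTraces 𝓕, fun p hp => (mem_filter.1 hp).2.1, isUnivGroebner_of_isSExtremal h⟩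
  · rintro ⟨P, hP, hG⟩
    obtain ⟨lin, hlin⟩ := exists_isTermOrder n
    have hsub := shatteredFamily_subset_stdSets hP hlin (hG lin hlin)
    rw [IsSExtremal, hsub.antisymm (stdSets_subset_shatteredFamily hlin), card_stdSets hlin]
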